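/- arXiv:1101.3218 — 2 statements merged into one kernel-verified Lean document; each statement's English description precedes it below -/
import Mathlib

section
/- L² form of Lemmas 'Approx T*' and 'Approx B' (zero order): let Ω ⊆ ℝ be a measurable set of finite Lebesgue measure μ(Ω), and let v : ℝ × ℝ → ℝ be Y-periodic in its second variable and Lipschitz in its first variable with constant L ≥ 0, uniformly in the second variable. Then for every ε > 0, (∫_Ω ((T_ε* v)(x) − (B_ε v)(x))² dx)^{1/2} ≤ L·ε·μ(Ω)^{1/2}; in particular T_ε* v = B_ε v + O(ε) and B_ε v = T_ε* v + O(ε), where O(ε) denotes a function whose L²(Ω)-norm vanishes as ε → 0⁺. -/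
open MeasureTheory intervalIntegral Set

/-- `kEps ε x = ⌊x/ε + 1/2⌋`. -/
noncomputable def kEps (ε x : ℝ) : ℤ := ⌊x / ε + 1 / 2⌋

/-- `cEps ε x = ε · kEps ε x`. -/
noncomputable def cEps (ε x : ℝ) : ℝ := ε * (kEps ε x : ℝ)

/-- `yEps ε x = x/ε − kEps ε x`. -/
noncomputable def yEps (ε x : ℝ) : ℝ := x / ε - (kEps ε x : ℝ)

/-- The adjoint two-scale transform `(T_ε* w)(x) = ∫_{−1/2}^{1/2} w(c_ε(x) + ε·z, y_ε(x)) dz`. -/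
noncomputable def twoScaleAdj (ε : ℝ) (w : ℝ → ℝ → ℝ) (x : ℝ) : ℝ :=
  ∫ z in (-(1:ℝ)/2)..(1/2), w (cEps ε x + ε * z) (yEps ε x)

/-- The regularization operator `(B_ε w)(x) = w(x, x/ε)`. -/
noncomputable def regOp (ε : ℝ) (w : ℝ → ℝ → ℝ) (x : ℝ) : ℝ := w x (x / ε)

/-!
Since `y_ε(x)` differs from `x/ε` by an integer, periodicity gives `(B_ε v)(x) = v(x, y_ε(x))`,
while `(T_ε* v)(x)` averages `v(·, y_ε(x))` over the cell `c_ε(x) + ε·[-1/2, 1/2]`, which has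
width `ε` and contains `x = c_ε(x) + ε·y_ε(x)`. The Lipschitz bound therefore gives
`|T_ε* v − B_ε v| ≤ L·ε` pointwise, and squaring and integrating over `Ω` gives the `L²` estimate.
-/

open Function

theorem yEps_mem_Icc (ε x : ℝ) : yEps ε x ∈ Icc (-(1 / 2)) (1 / 2) := by
  have h₁ := Int.floor_le (x / ε + 1 / 2)
  have h₂ := Int.lt_floor_add_one (x / ε + 1 / 2)
  simp only [yEps, kEps]
  constructor <;> linarith

theorem cEps_add_mul_yEps {ε : ℝ} (hε : ε ≠ 0) (x : ℝ) : cEps ε x + ε * yEps ε x = x := by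
  simp only [cEps, yEps]
  field_simp
  ring

theorem abs_cEps_add_mul_sub_le {ε : ℝ} (hε : 0 < ε) (x : ℝ) {z : ℝ}
    (hz : z ∈ Icc (-(1 / 2)) (1 / 2)) : |cEps ε x + ε * z - x| ≤ ε := by
  obtain ⟨hy₁, hy₂⟩ := yEps_mem_Icc ε x
  have hdiff : cEps ε x + ε * z - x = ε * (z - yEps ε x) := by
    nth_rw 2 [← cEps_add_mul_yEps hε.ne' x]
    ring
  rw [hdiff, abs_mul, abs_of_pos hε]
  exact mul_le_of_le_one_right hε.le (abs_le.mpr ⟨by linarith [hz.1], by linarith [hz.2]⟩)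

theorem regOp_eq_of_periodic {v : ℝ → ℝ → ℝ} (hper : ∀ x, Periodic (v x) 1) (ε x : ℝ) :
    regOp ε v x = v x (yEps ε x) := by
  simpa only [regOp, yEps, mul_one] using ((hper x).sub_int_mul_eq (kEps ε x)).symm

theorem abs_twoScaleAdj_sub_regOp_le {v : ℝ → ℝ → ℝ} (hper : ∀ x, Periodic (v x) 1)
    {L : ℝ} (hL : 0 ≤ L) (hLip : ∀ x x' y : ℝ, |v x y - v x' y| ≤ L * |x - x'|)
    {ε : ℝ} (hε : 0 < ε) (x : ℝ) : |twoScaleAdj ε v x - regOp ε v x| ≤ L * ε := by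
  set y := yEps ε x
  have hcont : Continuous fun z => v (cEps ε x + ε * z) y :=
    (LipschitzWith.of_dist_le' (f := (v · y)) fun a b => by
      simpa only [Real.dist_eq] using hLip a b y).continuous.comp (by fun_prop)
  have hdiff : twoScaleAdj ε v x - regOp ε v x =
      ∫ z in (-(1 : ℝ) / 2)..(1 / 2), (v (cEps ε x + ε * z) y - v x y) := by
    rw [integral_sub (hcont.intervalIntegrable _ _) intervalIntegrable_const,
      intervalIntegral.integral_const, regOp_eq_of_periodic hper]
    norm_num [twoScaleAdj, y]
  have hbound : ∀ z ∈ uIoc (-(1 : ℝ) / 2) (1 / 2), ‖v (cEps ε x + ε * z) y - v x y‖ ≤ L * ε := by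
    intro z hz
    rw [uIoc_of_le (by norm_num)] at hz
    have hz' : z ∈ Icc (-(1 / 2)) (1 / 2) := ⟨by linarith [hz.1], hz.2⟩
    calc ‖v (cEps ε x + ε * z) y - v x y‖ ≤ L * |cEps ε x + ε * z - x| := hLip _ _ _
      _ ≤ L * ε := mul_le_mul_of_nonneg_left (abs_cEps_add_mul_sub_le hε x hz') hL
  have hwidth : |(1 : ℝ) / 2 - -1 / 2| = 1 := by norm_num
  rw [hdiff, ← Real.norm_eq_abs]
  simpa only [hwidth, mul_one] using norm_integral_le_of_norm_le_const hbound

theorem sqrt_setIntegral_sq_le_of_abs_le {α : Type*} [MeasurableSpace α] {μ : Measure α}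
    {s : Set α} (hs : μ s < ⊤) {f : α → ℝ} {C : ℝ} (hC : 0 ≤ C) (hf : ∀ x ∈ s, |f x| ≤ C) :
    √(∫ x in s, f x ^ 2 ∂μ) ≤ C * √(μ.real s) := by
  have hsq : ∀ x ∈ s, ‖f x ^ 2‖ ≤ C ^ 2 := fun x hx => by
    simpa only [norm_pow, Real.norm_eq_abs] using pow_le_pow_left₀ (abs_nonneg _) (hf x hx) 2
  calc √(∫ x in s, f x ^ 2 ∂μ) ≤ √(C ^ 2 * μ.real s) :=
        Real.sqrt_le_sqrt ((le_abs_self _).trans (norm_setIntegral_le_of_norm_le_const hs hsq))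
    _ = C * √(μ.real s) := by rw [Real.sqrt_mul (sq_nonneg C), Real.sqrt_sq hC]

theorem twoScaleAdj_approx_regOp_L2_general (Ω : Set ℝ)
    (hμΩ : volume Ω < ⊤)
    (v : ℝ → ℝ → ℝ)
    (hper : ∀ x y : ℝ, v x (y + 1) = v x y)
    (L : ℝ) (hL : 0 ≤ L)
    (hLip : ∀ x x' y : ℝ, |v x y - v x' y| ≤ L * |x - x'|)
    (ε : ℝ) (hε : 0 < ε) :
    Real.sqrt (∫ x in Ω, (twoScaleAdj ε v x - regOp ε v x) ^ 2) ≤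
      L * ε * Real.sqrt ((volume Ω).toReal) :=
  sqrt_setIntegral_sq_le_of_abs_le hμΩ (mul_nonneg hL hε.le) fun x _ =>
    abs_twoScaleAdj_sub_regOp_le hper hL hLip hε x

/-- L² form of Lemmas "Approx T*" and "Approx B" at zero order:
the L²(Ω)-norm of `T_ε* v − B_ε v` is at most `L·ε·μ(Ω)^{1/2}`. -/
theorem twoScaleAdj_approx_regOp_L2 (Ω : Set ℝ) (hΩ : MeasurableSet Ω)
    (hμΩ : volume Ω < ⊤)
    (v : ℝ → ℝ → ℝ)
    (hper : ∀ x y : ℝ, v x (y + 1) = v x y)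
    (L : ℝ) (hL : 0 ≤ L)
    (hLip : ∀ x x' y : ℝ, |v x y - v x' y| ≤ L * |x - x'|)
    (ε : ℝ) (hε : 0 < ε) :
    Real.sqrt (∫ x in Ω, (twoScaleAdj ε v x - regOp ε v x) ^ 2) ≤
      L * ε * Real.sqrt ((volume Ω).toReal) :=
  twoScaleAdj_approx_regOp_L2_general Ω hμΩ v hper L hL hLip ε hε
end

section
/- Gradient weak two-scale convergence property (one-dimensional form of the paper's main proved result): for each ε ∈ (0, 1) let u_ε : ℝ → ℝ be continuously differentiable and square-integrable with derivative u_ε' square-integrable, and assume there is C > 0 with ∫_ℝ (u_ε'(x))² dx ≤ C for all ε ∈ (0, 1). Let u⁰ : ℝ → ℝ be continuously differentiable with u⁰ and its derivative ∂ₓu⁰ square-integrable and ∂ₓu⁰ bounded, and let u¹ : ℝ × ℝ → ℝ be continuously differentiable, Y-periodic in its second variable, with u¹ square-integrable on ℝ × Y. Assume the two asymptotic hypotheses: (i) ∫_ℝ ∫_{−1/2}^{1/2} ((T_ε u_ε)(x, y) − u⁰(x))² dy dx → 0 as ε → 0⁺ (i.e. T_ε u_ε = u⁰ + O(ε)); (ii)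 (1/ε²)·∫_ℝ ∫_{−1/2}^{1/2} ((T_ε u_ε)(x, y) − u⁰(x) − ε·u¹(x, y) − ε·y·∂ₓu⁰(x))² dy dx → 0 as ε → 0⁺ (i.e. T_ε u_ε = u⁰ + ε u¹ + ε y·∇ₓu⁰ + ε O(ε)). Then for every infinitely differentiable v : ℝ × ℝ → ℝ that is Y-periodic in its second variable, satisfies v(x, y) = 0 whenever |x| ≥ R for some R > 0, and vanishes on the cell boundary (v(x, −1/2) = v(x, 1/2) = 0 and ∂ₓv(x, −1/2) = ∂ₓv(x, 1/2) = 0 for all x), one has ∫_ℝ ∫_{−1/2}^{1/2} (T_ε u_ε')(x, y)·v(x, y) dy dx → ∫_ℝ ∫_{−1/2}^{1/2} (∂ₓu⁰(x) + ∂_yu¹(x, y))·v(x, y) dy dx as ε → 0⁺; that is, T(∇u_ε) converges weakly to ∇ₓu⁰ + ∇_yu¹. -/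
open MeasureTheory intervalIntegral Set Filter Topology

/-- The two-scale transform `(T_ε u)(x, y) = u(c_ε(x) + ε·y)`. -/
noncomputable def twoScale (ε : ℝ) (u : ℝ → ℝ) (x y : ℝ) : ℝ := u (cEps ε x + ε * y)

/-- Partial derivative with respect to the first variable. -/
noncomputable def pdx (v : ℝ → ℝ → ℝ) (x y : ℝ) : ℝ := deriv (fun t => v t y) x

/-- Partial derivative with respect to the second variable. -/
noncomputable def pdy (v : ℝ → ℝ → ℝ) (x y : ℝ) : ℝ := deriv (fun t => v x t) y

lemma measurable_cEps (ε : ℝ) : Measurable (cEps ε) := by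
  unfold cEps kEps
  have h1 : Measurable fun x : ℝ => ⌊x / ε + 1 / 2⌋ :=
    Measurable.floor (measurable_id.div_const ε |>.add_const _)
  have h2 : Measurable (fun n : ℤ => (n : ℝ)) := measurable_from_top
  exact (h2.comp h1).const_mul ε

lemma cEps_dist {ε x : ℝ} (hε : 0 < ε) : |cEps ε x - x| ≤ ε / 2 := by
  unfold cEps kEps
  have h1 : (⌊x / ε + 1 / 2⌋ : ℝ) ≤ x / ε + 1 / 2 := Int.floor_le _
  have h2 : x / ε + 1 / 2 - 1 < ⌊x / ε + 1 / 2⌋ := Int.sub_one_lt_floor _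
  have k1 : ε * (⌊x / ε + 1 / 2⌋ : ℝ) ≤ ε * (x / ε + 1 / 2) :=
    mul_le_mul_of_nonneg_left h1 hε.le
  have k2 : ε * (x / ε + 1 / 2 - 1) ≤ ε * (⌊x / ε + 1 / 2⌋ : ℝ) :=
    mul_le_mul_of_nonneg_left h2.le hε.le
  have hev : ε * (x / ε) = x := by field_simp
  have k2' : ε * (x / ε) + ε * (1/2) - ε ≤ ε * (⌊x / ε + 1 / 2⌋ : ℝ) := by ring_nf; ring_nf at k2; linarith
  rw [abs_le]; rw [mul_add] at k1
  constructor <;> linarith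

lemma hasDerivAt_snd {G : ℝ × ℝ → ℝ} (hG : ContDiff ℝ 1 G) (x y : ℝ) :
    HasDerivAt (fun t => G (x, t)) (fderiv ℝ G (x, y) (0, 1)) y := by
  have h1 : HasDerivAt (fun t : ℝ => ((x, t) : ℝ × ℝ)) ((0 : ℝ), (1 : ℝ)) y :=
    (hasDerivAt_const y x).prodMk (hasDerivAt_id y)
  exact ((hG.differentiable one_ne_zero (x, y)).hasFDerivAt).comp_hasDerivAt y h1

lemma continuous_fderiv_apply_snd {G : ℝ × ℝ → ℝ} (hG : ContDiff ℝ 1 G) :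
    Continuous (fun p : ℝ × ℝ => fderiv ℝ G p ((0 : ℝ), (1 : ℝ))) :=
  (ContinuousLinearMap.apply ℝ ℝ ((0:ℝ), (1:ℝ))).continuous.comp
    (hG.continuous_fderiv one_ne_zero)

lemma unfold_sq_integrable {ε : ℝ} (hε0 : 0 < ε) {F : ℝ → ℝ} (hF : Continuous F)
    (hFi : Integrable (fun x => F x ^ 2)) :
    Integrable (fun p : ℝ × ℝ => F (cEps ε p.1 + ε * p.2) ^ 2)
      ((volume : Measure ℝ).prod ((volume : Measure ℝ).restrict (Ioc (-(1:ℝ)/2) (1/2)))) := by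
  have hmeas : Measurable (fun p : ℝ × ℝ => F (cEps ε p.1 + ε * p.2) ^ 2) :=
    (hF.measurable.comp (((measurable_cEps ε).comp measurable_fst).add
      (measurable_snd.const_mul ε))).pow_const 2
  refine (integrable_prod_iff hmeas.aestronglyMeasurable).2 ⟨?_, ?_⟩
  · refine Eventually.of_forall fun x => ?_
    have : Continuous fun y : ℝ => F (cEps ε x + ε * y) ^ 2 :=
      (hF.comp (continuous_const.add (continuous_const.mul continuous_id))).pow 2
    exact this.integrableOn_Ioc
  · -- the dominating kernel
    set S : Set (ℝ × ℝ) := {p : ℝ × ℝ | |p.1 - p.2| ≤ ε} with hS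
    have hSm : MeasurableSet S := by
      have : S = (fun p : ℝ × ℝ => |p.1 - p.2|) ⁻¹' Iic ε := rfl
      rw [this]
      exact ((measurable_fst.sub measurable_snd).abs) measurableSet_Iic
    set K : ℝ × ℝ → ℝ := fun p => S.indicator (fun q : ℝ × ℝ => F q.2 ^ 2) p with hK
    have hKfix : ∀ x y : ℝ, K (x, y) = (Icc (x - ε) (x + ε)).indicator (fun t => F t ^ 2) y := by
      intro x y
      show S.indicator (fun q : ℝ × ℝ => F q.2 ^ 2) (x, y) = _
      by_cases h : |x - y| ≤ ε
      · rw [Set.indicator_of_mem (show (x, y) ∈ S from h),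
          Set.indicator_of_mem (show y ∈ Icc (x - ε) (x + ε) by
            rw [mem_Icc]; rw [abs_le] at h; constructor <;> linarith [h.1, h.2])]
      · rw [Set.indicator_of_notMem (show (x, y) ∉ S from h),
          Set.indicator_of_notMem (show y ∉ Icc (x - ε) (x + ε) by
            intro hc; rw [mem_Icc] at hc; exact h (abs_le.2 ⟨by linarith [hc.1, hc.2], by linarith [hc.1, hc.2]⟩))]
    have hKfix' : ∀ x y : ℝ, K (x, y) = (Icc (y - ε) (y + ε)).indicator (fun _ => F y ^ 2) x := by
      intro x y
      show S.indicator (fun q : ℝ × ℝ => F q.2 ^ 2) (x, y) = _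
      by_cases h : |x - y| ≤ ε
      · rw [Set.indicator_of_mem (show (x, y) ∈ S from h),
          Set.indicator_of_mem (show x ∈ Icc (y - ε) (y + ε) by
            rw [mem_Icc]; rw [abs_le] at h; constructor <;> linarith [h.1, h.2])]
      · rw [Set.indicator_of_notMem (show (x, y) ∉ S from h),
          Set.indicator_of_notMem (show x ∉ Icc (y - ε) (y + ε) by
            intro hc; rw [mem_Icc] at hc; exact h (abs_le.2 ⟨by linarith [hc.1, hc.2], by linarith [hc.1, hc.2]⟩))]
    have hKm : Measurable K := ((hF.measurable.comp measurable_snd).pow_const 2).indicator hSm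
    have hKnonneg : ∀ p, 0 ≤ K p := fun p => indicator_nonneg (fun q _ => sq_nonneg _) _
    have hKint : Integrable K ((volume : Measure ℝ).prod (volume : Measure ℝ)) := by
      refine (integrable_prod_iff' hKm.aestronglyMeasurable).2 ⟨?_, ?_⟩
      · refine Eventually.of_forall fun y => ?_
        simp_rw [hKfix']
        exact (integrable_indicator_iff measurableSet_Icc).2
          (integrableOn_const measure_Icc_lt_top.ne)
      · have hval : ∀ y : ℝ, (∫ x, ‖K (x, y)‖) = (2 * ε) * F y ^ 2 := by
          intro y
          have h1 : (fun x => ‖K (x, y)‖) = fun x => (Icc (y - ε) (y + ε)).indicator (fun _ => F y ^ 2) x := by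
            funext x
            rw [Real.norm_eq_abs, abs_of_nonneg (hKnonneg _), hKfix']
          rw [h1, integral_indicator_const _ measurableSet_Icc, measureReal_def, Real.volume_Icc]
          have he : y + ε - (y - ε) = 2 * ε := by ring
          rw [he, ENNReal.toReal_ofReal (by linarith), smul_eq_mul]
        simp_rw [hval]
        exact hFi.const_mul _
    have hh : Integrable (fun x => ε⁻¹ * ∫ y, K (x, y)) volume :=
      (hKint.integral_prod_left).const_mul _
    -- measurability of the integrand
    have hgm : AEStronglyMeasurable
        (fun x => ∫ y in Ioc (-(1:ℝ)/2) (1/2), ‖F (cEps ε x + ε * y) ^ 2‖) volume :=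
      (hmeas.stronglyMeasurable.norm.integral_prod_right').aestronglyMeasurable
    refine Integrable.mono' hh hgm (Eventually.of_forall fun x => ?_)
    have hnonneg : 0 ≤ ∫ y in Ioc (-(1:ℝ)/2) (1/2), ‖F (cEps ε x + ε * y) ^ 2‖ :=
      integral_nonneg fun y => norm_nonneg _
    rw [Real.norm_eq_abs, abs_of_nonneg hnonneg]
    set c := cEps ε x with hc
    have h2 : (∫ y in Ioc (-(1:ℝ)/2) (1/2), ‖F (c + ε * y) ^ 2‖)
        = ∫ y in Ioc (-(1:ℝ)/2) (1/2), F (c + ε * y) ^ 2 := by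
      refine integral_congr_ae (Eventually.of_forall fun y => ?_)
      show ‖F (c + ε * y) ^ 2‖ = F (c + ε * y) ^ 2
      rw [Real.norm_eq_abs, abs_of_nonneg (sq_nonneg _)]
    have h3 : (∫ y in Ioc (-(1:ℝ)/2) (1/2), F (c + ε * y) ^ 2)
        = ∫ y in (-(1:ℝ)/2)..(1/2), F (c + ε * y) ^ 2 :=
      (intervalIntegral.integral_of_le (by norm_num)).symm
    have h4 : (∫ y in (-(1:ℝ)/2)..(1/2), F (c + ε * y) ^ 2)
        = ε⁻¹ * ∫ t in (ε * (-(1:ℝ)/2) + c)..(ε * (1/2) + c), F t ^ 2 := by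
      have : (fun y => F (c + ε * y) ^ 2) = fun y => (fun t => F t ^ 2) (ε * y + c) := by
        funext y; rw [add_comm]
      rw [this, intervalIntegral.integral_comp_mul_add (fun t => F t ^ 2) (ne_of_gt hε0) c,
        smul_eq_mul]
    have h5 : (∫ t in (ε * (-(1:ℝ)/2) + c)..(ε * (1/2) + c), F t ^ 2)
        = ∫ t in Ioc (ε * (-(1:ℝ)/2) + c) (ε * (1/2) + c), F t ^ 2 :=
      intervalIntegral.integral_of_le (by nlinarith)
    have hsub : Ioc (ε * (-(1:ℝ)/2) + c) (ε * (1/2) + c) ⊆ Icc (x - ε) (x + ε) := by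
      intro t ht
      have hd := cEps_dist (x := x) hε0
      rw [← hc] at hd
      rw [abs_le] at hd
      rcases ht with ⟨ht1, ht2⟩
      constructor <;> [skip; skip] <;> nlinarith [hd.1, hd.2]
    have h6 : (∫ t in Ioc (ε * (-(1:ℝ)/2) + c) (ε * (1/2) + c), F t ^ 2)
        ≤ ∫ t in Icc (x - ε) (x + ε), F t ^ 2 := by
      refine setIntegral_mono_set hFi.integrableOn
        (Eventually.of_forall fun t => sq_nonneg _) hsub.eventuallyLE
    have h7 : (∫ t in Icc (x - ε) (x + ε), F t ^ 2) = ∫ y, K (x, y) := by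
      rw [← MeasureTheory.integral_indicator measurableSet_Icc]
      refine integral_congr_ae (Eventually.of_forall fun y => ?_)
      show (Icc (x - ε) (x + ε)).indicator (fun t => F t ^ 2) y = K (x, y)
      exact (hKfix x y).symm
    calc (∫ y in Ioc (-(1:ℝ)/2) (1/2), ‖F (c + ε * y) ^ 2‖)
        = ε⁻¹ * ∫ t in Ioc (ε * (-(1:ℝ)/2) + c) (ε * (1/2) + c), F t ^ 2 := by
          rw [h2, h3, h4, h5]
      _ ≤ ε⁻¹ * ∫ y, K (x, y) := by
          rw [← h7]
          exact mul_le_mul_of_nonneg_left h6 (inv_nonneg.2 hε0.le)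

lemma bound_on_Icc {F : ℝ → ℝ} (hF : Continuous F) (a b : ℝ) :
    ∃ M, 0 ≤ M ∧ ∀ t ∈ Icc a b, |F t| ≤ M := by
  obtain ⟨M, hM⟩ := isCompact_Icc.exists_bound_of_continuousOn (hF.continuousOn (s := Icc a b))
  exact ⟨max M 0, le_max_right _ _, fun t ht =>
    (Real.norm_eq_abs (F t) ▸ hM t ht).trans (le_max_left _ _)⟩

lemma bound_on_rect {G : ℝ × ℝ → ℝ} (hG : Continuous G) (R : ℝ) :
    ∃ M, 0 ≤ M ∧ ∀ x y : ℝ, |x| ≤ R → |y| ≤ 1 → |G (x, y)| ≤ M := by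
  obtain ⟨M, hM⟩ := (isCompact_Icc.prod isCompact_Icc :
    IsCompact (Icc (-R) R ×ˢ Icc (-(1:ℝ)) 1)).exists_bound_of_continuousOn hG.continuousOn
  refine ⟨max M 0, le_max_right _ _, fun x y hx hy => ?_⟩
  have : (x, y) ∈ Icc (-R) R ×ˢ Icc (-(1:ℝ)) 1 := by
    constructor <;> rw [mem_Icc] <;> [exact abs_le.1 hx; exact abs_le.1 hy]
  exact (Real.norm_eq_abs (G (x, y)) ▸ hM _ this).trans (le_max_left _ _)

lemma amgm_abs (t a b : ℝ) (ht : 0 < t) : |a * b| ≤ t / 2 * a ^ 2 + 1 / (2 * t) * b ^ 2 := by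
  rw [abs_mul]
  set u := 1 / (2 * t) with hudef
  have hu : u * (2 * t) = 1 := by rw [hudef]; field_simp
  have hut : u * t ^ 2 = t / 2 := by rw [hudef]; field_simp
  have h1 : 0 ≤ (t * |a| - |b|) ^ 2 := sq_nonneg _
  have h5 : 0 ≤ u * ((t * |a| - |b|) ^ 2) := mul_nonneg (by positivity) h1
  have h6 : u * ((t * |a| - |b|) ^ 2)
      = u * t ^ 2 * |a| ^ 2 - (u * (2 * t)) * (|a| * |b|) + u * |b| ^ 2 := by ring
  rw [h6, hu, hut, sq_abs, sq_abs] at h5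
  linarith

lemma sq_four (a b c d : ℝ) : (a - b - c - d) ^ 2 ≤ 4 * (a^2 + b^2 + c^2 + d^2) := by
  nlinarith [sq_nonneg (a + b), sq_nonneg (a + c), sq_nonneg (a + d), sq_nonneg (b + c),
    sq_nonneg (b + d), sq_nonneg (c + d), sq_nonneg (a - b), sq_nonneg (a - c), sq_nonneg (a - d),
    sq_nonneg (b - c), sq_nonneg (b - d), sq_nonneg (c - d)]

lemma ae_snd_mem_Ioc :
    ∀ᵐ p : ℝ × ℝ ∂((volume : Measure ℝ).prod
      ((volume : Measure ℝ).restrict (Ioc (-(1:ℝ)/2) (1/2)))),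
      p.2 ∈ Ioc (-(1:ℝ)/2) (1/2) := by
  set ν := (volume : Measure ℝ).restrict (Ioc (-(1:ℝ)/2) (1/2)) with hν
  rw [ae_iff]
  have hset : {p : ℝ × ℝ | ¬p.2 ∈ Ioc (-(1:ℝ)/2) (1/2)}
      = (univ : Set ℝ) ×ˢ (Ioc (-(1:ℝ)/2) (1/2))ᶜ := by
    ext p; simp [Set.mem_prod]
  rw [hset, Measure.prod_prod]
  have : ν (Ioc (-(1:ℝ)/2) (1/2))ᶜ = 0 := by
    rw [hν, Measure.restrict_apply (measurableSet_Ioc.compl)]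
    simp
  rw [this, mul_zero]
set_option maxHeartbeats 2000000 in
/-- Gradient weak two-scale convergence property (one-dimensional form):
under hypotheses (i) `T_ε u_ε = u⁰ + O(ε)` and
(ii) `T_ε u_ε = u⁰ + ε u¹ + ε y·∇ₓu⁰ + ε O(ε)`,
the two-scale transform of the gradients `T_ε(u_ε')` converges weakly to
`∇ₓu⁰ + ∇_yu¹` against smooth test functions vanishing on the boundaries. -/
theorem gradient_weak_two_scale_convergence
    (u : ℝ → ℝ → ℝ)
    (hu : ∀ ε ∈ Set.Ioo (0:ℝ) 1, ContDiff ℝ 1 (u ε))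
    (huL2 : ∀ ε ∈ Set.Ioo (0:ℝ) 1, Integrable (fun x => (u ε x) ^ 2))
    (huderL2 : ∀ ε ∈ Set.Ioo (0:ℝ) 1, Integrable (fun x => (deriv (u ε) x) ^ 2))
    (C : ℝ) (hC : 0 < C)
    (hbound : ∀ ε ∈ Set.Ioo (0:ℝ) 1, ∫ x : ℝ, (deriv (u ε) x) ^ 2 ≤ C)
    (u0 : ℝ → ℝ) (hu0 : ContDiff ℝ 1 u0)
    (hu0L2 : Integrable (fun x => (u0 x) ^ 2))
    (hu0derL2 : Integrable (fun x => (deriv u0 x) ^ 2))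
    (M0 : ℝ) (hu0derBdd : ∀ x : ℝ, |deriv u0 x| ≤ M0)
    (u1 : ℝ → ℝ → ℝ) (hu1 : ContDiff ℝ 1 (fun p : ℝ × ℝ => u1 p.1 p.2))
    (hu1per : ∀ x y : ℝ, u1 x (y + 1) = u1 x y)
    (hu1L2 : IntegrableOn (fun p : ℝ × ℝ => (u1 p.1 p.2) ^ 2)
      (Set.univ ×ˢ Set.Ico (-(1:ℝ)/2) (1/2)))
    -- hypothesis (i): T_ε u_ε = u⁰ + O(ε)
    (hyp1 : Tendsto (fun ε : ℝ =>
        ∫ x : ℝ, ∫ y in (-(1:ℝ)/2)..(1/2), (twoScale ε (u ε) x y - u0 x) ^ 2)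
      (𝓝[>] 0) (𝓝 0))
    -- hypothesis (ii): T_ε u_ε = u⁰ + ε u¹ + ε y·∇ₓu⁰ + ε O(ε)
    (hyp2 : Tendsto (fun ε : ℝ =>
        (1 / ε ^ 2) * ∫ x : ℝ, ∫ y in (-(1:ℝ)/2)..(1/2),
          (twoScale ε (u ε) x y - u0 x - ε * u1 x y - ε * y * deriv u0 x) ^ 2)
      (𝓝[>] 0) (𝓝 0))
    (v : ℝ → ℝ → ℝ) (hv : ContDiff ℝ (⊤ : ℕ∞) (fun p : ℝ × ℝ => v p.1 p.2))
    (hvper : ∀ x y : ℝ, v x (y + 1) = v x y)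
    (R : ℝ) (hR : 0 < R) (hvsupp : ∀ x y : ℝ, R ≤ |x| → v x y = 0)
    (hvbd1 : ∀ x : ℝ, v x (-(1:ℝ)/2) = 0) (hvbd2 : ∀ x : ℝ, v x (1/2) = 0)
    (hvbd3 : ∀ x : ℝ, pdx v x (-(1:ℝ)/2) = 0)
    (hvbd4 : ∀ x : ℝ, pdx v x (1/2) = 0) :
    Tendsto (fun ε : ℝ =>
        ∫ x : ℝ, ∫ y in (-(1:ℝ)/2)..(1/2), twoScale ε (deriv (u ε)) x y * v x y)
      (𝓝[>] 0)
      (𝓝 (∫ x : ℝ, ∫ y in (-(1:ℝ)/2)..(1/2),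
        (deriv u0 x + pdy u1 x y) * v x y)) := by
  have hab : (-(1:ℝ)/2) ≤ 1/2 := by norm_num
  set ν : Measure ℝ := (volume : Measure ℝ).restrict (Ioc (-(1:ℝ)/2) (1/2)) with hν
  set P : Measure (ℝ × ℝ) := (volume : Measure ℝ).prod ν with hP
  -- derivatives in the second variable
  have hv1 : ContDiff ℝ 1 (fun p : ℝ × ℝ => v p.1 p.2) := hv.of_le (by simp)
  set vy : ℝ → ℝ → ℝ :=
    fun x y => fderiv ℝ (fun p : ℝ × ℝ => v p.1 p.2) (x, y) ((0:ℝ), (1:ℝ)) with hvydef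
  have hvyd : ∀ x y : ℝ, HasDerivAt (fun t => v x t) (vy x y) y := fun x y =>
    hasDerivAt_snd hv1 x y
  have hvyc : Continuous (fun p : ℝ × ℝ => vy p.1 p.2) := continuous_fderiv_apply_snd hv1
  set w1y : ℝ → ℝ → ℝ :=
    fun x y => fderiv ℝ (fun p : ℝ × ℝ => u1 p.1 p.2) (x, y) ((0:ℝ), (1:ℝ)) with hw1ydef
  have hu1yd : ∀ x y : ℝ, HasDerivAt (fun t => u1 x t) (w1y x y) y := fun x y =>
    hasDerivAt_snd hu1 x y
  have hw1yc : Continuous (fun p : ℝ × ℝ => w1y p.1 p.2) := continuous_fderiv_apply_snd hu1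
  have hpdyu1 : ∀ x y : ℝ, pdy u1 x y = w1y x y := fun x y => (hu1yd x y).deriv
  have hvy0 : ∀ x y : ℝ, R ≤ |x| → vy x y = 0 := by
    intro x y hx
    have h0 : (fun t => v x t) = fun _ : ℝ => (0:ℝ) := funext fun t => hvsupp x t hx
    have := (hvyd x y).deriv
    rw [h0] at this
    rw [← this, deriv_const]
  -- continuity facts
  have hu0' : Continuous (deriv u0) := hu0.continuous_deriv le_rfl
  have hu0c : Continuous u0 := hu0.continuous
  have hu1c : Continuous (fun p : ℝ × ℝ => u1 p.1 p.2) := hu1.continuous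
  have hvc : Continuous (fun p : ℝ × ℝ => v p.1 p.2) := hv.continuous
  have hvyx : ∀ x : ℝ, Continuous (fun y => vy x y) := fun x =>
    hvyc.comp (continuous_const.prodMk continuous_id)
  have hw1yx : ∀ x : ℝ, Continuous (fun y => w1y x y) := fun x =>
    hw1yc.comp (continuous_const.prodMk continuous_id)
  have hvx : ∀ x : ℝ, Continuous (fun y => v x y) := fun x =>
    hvc.comp (continuous_const.prodMk continuous_id)
  have hu1x : ∀ x : ℝ, Continuous (fun y => u1 x y) := fun x =>
    hu1c.comp (continuous_const.prodMk continuous_id)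
  -- bounds
  obtain ⟨Mv, hMv0, hMv⟩ := bound_on_rect hvc R
  obtain ⟨Md, hMd0, hMd⟩ := bound_on_rect hvyc R
  obtain ⟨M1, hM10, hM1⟩ := bound_on_rect hu1c R
  obtain ⟨Mdu, hMdu0, hMdu⟩ := bound_on_rect hw1yc R
  obtain ⟨Mu0, hMu00, hMu0⟩ := bound_on_Icc hu0c (-R) R
  have hM00 : 0 ≤ M0 := le_trans (abs_nonneg _) (hu0derBdd 0)
  -- the remainder function
  set w : ℝ → ℝ → ℝ → ℝ := fun ε x y =>
    twoScale ε (u ε) x y - u0 x - ε * u1 x y - ε * y * deriv u0 x with hwdef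
  -- square integrability of vy over P
  have hvy2int : Integrable (fun p : ℝ × ℝ => (vy p.1 p.2) ^ 2) P := by
    have hbd : Integrable (fun z : ℝ × ℝ =>
        (Icc (-R) R).indicator (fun _ => Md ^ 2) z.1 * (1:ℝ)) P :=
      Integrable.mul_prod
        ((integrable_indicator_iff measurableSet_Icc).2
          (integrableOn_const (C := Md ^ 2) measure_Icc_lt_top.ne))
        (integrableOn_const (C := (1:ℝ)) (μ := volume) measure_Ioc_lt_top.ne : Integrable (fun _ => (1:ℝ)) ν)
    refine Integrable.mono' hbd
      ((hvyc.pow 2).aestronglyMeasurable) ?_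
    filter_upwards [ae_snd_mem_Ioc] with p hp
    by_cases hx : |p.1| ≤ R
    · rw [indicator_of_mem (mem_Icc.2 ⟨(abs_le.1 hx).1, (abs_le.1 hx).2⟩), mul_one]
      have hy : |p.2| ≤ 1 := by
        rw [abs_le]; rcases hp with ⟨h1, h2⟩; constructor <;> linarith
      have h3 := hMd p.1 p.2 hx hy
      have : ‖vy p.1 p.2 ^ 2‖ = |vy p.1 p.2| ^ 2 := by
        rw [Real.norm_eq_abs, abs_of_nonneg (sq_nonneg _), ← sq_abs]
      rw [this]
      exact pow_le_pow_left₀ (abs_nonneg _) h3 2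
    · rw [hvy0 _ _ (le_of_lt (lt_of_not_ge hx))]
      simp only [ne_eq, OfNat.ofNat_ne_zero, not_false_eq_true, zero_pow, norm_zero, mul_one]
      exact indicator_nonneg (fun _ _ => sq_nonneg _) _
  set W : ℝ := ∫ p : ℝ × ℝ, (vy p.1 p.2) ^ 2 ∂P with hWdef
  have hW0 : 0 ≤ W := integral_nonneg fun p => sq_nonneg _
  -- square integrability of the remainder over P
  have hwsq : ∀ ε ∈ Ioo (0:ℝ) 1, Integrable (fun p : ℝ × ℝ => (w ε p.1 p.2) ^ 2) P := by
    intro ε hε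
    have hA : Integrable (fun p : ℝ × ℝ => (u ε) (cEps ε p.1 + ε * p.2) ^ 2) P :=
      unfold_sq_integrable hε.1 (hu ε hε).continuous (huL2 ε hε)
    have hB : Integrable (fun p : ℝ × ℝ => u0 p.1 ^ 2) P := by
      have h1 : Integrable (fun z : ℝ × ℝ => u0 z.1 ^ 2 * (1:ℝ)) P :=
        hu0L2.mul_prod (integrableOn_const measure_Ioc_lt_top.ne)
      simpa using h1
    have hC : Integrable (fun p : ℝ × ℝ => (u1 p.1 p.2) ^ 2) P := by
      have h0 := hu1L2
      rw [IntegrableOn, Measure.volume_eq_prod, ← Measure.prod_restrict, Measure.restrict_univ] at h0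
      have h1 : (volume : Measure ℝ).restrict (Ico (-(1:ℝ)/2) (1/2)) = ν :=
        Measure.restrict_congr_set Ico_ae_eq_Ioc
      rwa [h1] at h0
    have hD : Integrable (fun p : ℝ × ℝ => (deriv u0 p.1) ^ 2 * (ε * p.2) ^ 2) P :=
      hu0derL2.mul_prod (Continuous.integrableOn_Ioc ((continuous_const.mul continuous_id).pow 2))
    have hwm : Measurable (fun p : ℝ × ℝ => w ε p.1 p.2) := by
      simp only [hwdef, twoScale]
      exact ((((hu ε hε).continuous.measurable.comp
        (((measurable_cEps ε).comp measurable_fst).add (measurable_snd.const_mul ε))).sub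
        (hu0c.measurable.comp measurable_fst)).sub (hu1c.measurable.const_mul ε)).sub
        ((measurable_snd.const_mul ε).mul (hu0'.measurable.comp measurable_fst))
    have hsum : Integrable (fun p : ℝ × ℝ =>
        4 * ((u ε) (cEps ε p.1 + ε * p.2) ^ 2 + u0 p.1 ^ 2 + ε ^ 2 * (u1 p.1 p.2) ^ 2
          + (deriv u0 p.1) ^ 2 * (ε * p.2) ^ 2)) P :=
      (((hA.add hB).add (hC.const_mul _)).add hD).const_mul 4
    refine Integrable.mono' hsum ((hwm.pow_const 2).aestronglyMeasurable)
      (Eventually.of_forall fun p => ?_)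
    have h1 : ‖w ε p.1 p.2 ^ 2‖ = w ε p.1 p.2 ^ 2 := by
      rw [Real.norm_eq_abs, abs_of_nonneg (sq_nonneg _)]
    rw [h1, hwdef]
    have h2 := sq_four (twoScale ε (u ε) p.1 p.2) (u0 p.1) (ε * u1 p.1 p.2)
      (ε * p.2 * deriv u0 p.1)
    calc (twoScale ε (u ε) p.1 p.2 - u0 p.1 - ε * u1 p.1 p.2 - ε * p.2 * deriv u0 p.1) ^ 2
        ≤ 4 * (twoScale ε (u ε) p.1 p.2 ^ 2 + u0 p.1 ^ 2 + (ε * u1 p.1 p.2) ^ 2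
            + (ε * p.2 * deriv u0 p.1) ^ 2) := h2
      _ = 4 * ((u ε) (cEps ε p.1 + ε * p.2) ^ 2 + u0 p.1 ^ 2 + ε ^ 2 * (u1 p.1 p.2) ^ 2
            + (deriv u0 p.1) ^ 2 * (ε * p.2) ^ 2) := by
          simp only [twoScale]; ring
  -- Q-form of hypothesis 2 quantity
  have hQeq : ∀ ε ∈ Ioo (0:ℝ) 1,
      (1 / ε ^ 2) * (∫ x : ℝ, ∫ y in (-(1:ℝ)/2)..(1/2), (w ε x y) ^ 2)
        = ∫ p : ℝ × ℝ, (w ε p.1 p.2 / ε) ^ 2 ∂P := by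
    intro ε hε
    have hεne : ε ≠ 0 := ne_of_gt hε.1
    have h1 : (∫ x : ℝ, ∫ y in (-(1:ℝ)/2)..(1/2), (w ε x y) ^ 2)
        = ∫ x : ℝ, ∫ y, (fun p : ℝ × ℝ => (w ε p.1 p.2) ^ 2) (x, y) ∂ν :=
      integral_congr_ae (Eventually.of_forall fun x => intervalIntegral.integral_of_le hab)
    rw [h1, ← MeasureTheory.integral_prod _ (hwsq ε hε), ← MeasureTheory.integral_const_mul]
    refine integral_congr_ae (Eventually.of_forall fun p => ?_)
    show 1 / ε ^ 2 * (w ε p.1 p.2) ^ 2 = (w ε p.1 p.2 / ε) ^ 2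
    field_simp
  have hQint : ∀ ε ∈ Ioo (0:ℝ) 1,
      Integrable (fun p : ℝ × ℝ => (w ε p.1 p.2 / ε) ^ 2) P := by
    intro ε hε
    have h1 := (hwsq ε hε).const_mul (1 / ε ^ 2)
    refine h1.congr (Eventually.of_forall fun p => ?_)
    field_simp
  -- the key identity
  have key : ∀ ε ∈ Ioo (0:ℝ) 1,
      Integrable (fun p : ℝ × ℝ => (w ε p.1 p.2 / ε) * vy p.1 p.2) P ∧
      (∫ x : ℝ, ∫ y in (-(1:ℝ)/2)..(1/2), twoScale ε (deriv (u ε)) x y * v x y)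
        = (∫ x : ℝ, ∫ y in (-(1:ℝ)/2)..(1/2), (deriv u0 x + pdy u1 x y) * v x y)
          - ∫ p : ℝ × ℝ, (w ε p.1 p.2 / ε) * vy p.1 p.2 ∂P := by
    intro ε hε
    obtain ⟨hε0, hε1⟩ := hε
    have hεne : ε ≠ 0 := ne_of_gt hε0
    have hcd1 : ContDiff ℝ 1 (u ε) := hu ε ⟨hε0, hε1⟩
    have hud : ∀ s : ℝ, HasDerivAt (u ε) (deriv (u ε) s) s := fun s =>
      (hcd1.differentiable one_ne_zero s).hasDerivAt
    have hduc : Continuous (deriv (u ε)) := hcd1.continuous_deriv le_rfl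
    have huc : Continuous (u ε) := hcd1.continuous
    obtain ⟨Mu, hMun, hMu⟩ := bound_on_Icc huc (-(R+1)) (R+1)
    have hKw0 : 0 ≤ Mu + Mu0 + M1 + M0 := by linarith
    have hwcont : ∀ x : ℝ, Continuous (fun y => w ε x y) := by
      intro x
      simp only [hwdef, twoScale]
      exact (((huc.comp (continuous_const.add (continuous_const.mul continuous_id))).sub
        continuous_const).sub (continuous_const.mul (hu1x x))).sub
        ((continuous_const.mul continuous_id).mul continuous_const)
    have hwm : Measurable fun p : ℝ × ℝ => w ε p.1 p.2 := by
      simp only [hwdef, twoScale]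
      exact (((huc.measurable.comp (((measurable_cEps ε).comp measurable_fst).add
        (measurable_snd.const_mul ε))).sub (hu0c.measurable.comp measurable_fst)).sub
        (hu1c.measurable.const_mul ε)).sub
        ((measurable_snd.const_mul ε).mul (hu0'.measurable.comp measurable_fst))
    have hwbd : ∀ x y : ℝ, |x| ≤ R → |y| ≤ 1/2 → |w ε x y| ≤ Mu + Mu0 + M1 + M0 := by
      intro x y hx hy
      have harg : cEps ε x + ε * y ∈ Icc (-(R+1)) (R+1) := by
        have h1 := abs_le.1 (cEps_dist (x := x) hε0)
        have h2 : |ε * y| ≤ 1/2 := by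
          rw [abs_mul, abs_of_pos hε0]
          calc ε * |y| ≤ 1 * (1/2) :=
                mul_le_mul hε1.le hy (abs_nonneg _) (by norm_num)
            _ = 1/2 := by norm_num
        have h3 := abs_le.1 h2
        have h4 := abs_le.1 hx
        rw [mem_Icc]
        constructor <;> linarith [h1.1, h1.2, h3.1, h3.2, h4.1, h4.2, hε1.le]
      have hA' : |twoScale ε (u ε) x y| ≤ Mu := hMu _ harg
      have hB : |u0 x| ≤ Mu0 := hMu0 x (mem_Icc.2 (abs_le.1 hx))
      have hC : |ε * u1 x y| ≤ M1 := by
        rw [abs_mul, abs_of_pos hε0]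
        calc ε * |u1 x y| ≤ 1 * M1 :=
              mul_le_mul hε1.le (hM1 x y hx (by linarith)) (abs_nonneg _) (by norm_num)
          _ = M1 := one_mul M1
      have hD : |ε * y * deriv u0 x| ≤ M0 := by
        rw [abs_mul]
        have h5 : |ε * y| ≤ 1 := by
          rw [abs_mul, abs_of_pos hε0]
          calc ε * |y| ≤ 1 * (1/2) :=
                mul_le_mul hε1.le hy (abs_nonneg _) (by norm_num)
            _ ≤ 1 := by norm_num
        calc |ε * y| * |deriv u0 x| ≤ 1 * M0 :=
              mul_le_mul h5 (hu0derBdd x) (abs_nonneg _) (by norm_num)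
          _ = M0 := one_mul M0
      have hw' : w ε x y = twoScale ε (u ε) x y - u0 x - ε * u1 x y - ε * y * deriv u0 x := by
        rw [hwdef]
      rw [hw', abs_le]
      constructor <;> linarith [(abs_le.1 hA').1, (abs_le.1 hA').2, (abs_le.1 hB).1,
        (abs_le.1 hB).2, (abs_le.1 hC).1, (abs_le.1 hC).2, (abs_le.1 hD).1, (abs_le.1 hD).2]
    -- the inner (in y) integration by parts identity
    have inner : ∀ x : ℝ,
        (∫ y in (-(1:ℝ)/2)..(1/2), twoScale ε (deriv (u ε)) x y * v x y)
          = (∫ y in (-(1:ℝ)/2)..(1/2), (deriv u0 x + pdy u1 x y) * v x y)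
            - ∫ y in (-(1:ℝ)/2)..(1/2), (w ε x y / ε) * vy x y := by
      intro x
      have hTud : ∀ y : ℝ, HasDerivAt (fun z => u ε (cEps ε x + ε * z))
          (deriv (u ε) (cEps ε x + ε * y) * ε) y := by
        intro y
        have h1 : HasDerivAt (fun z : ℝ => cEps ε x + ε * z) ε y := by
          have := (hasDerivAt_const y (cEps ε x)).add ((hasDerivAt_id y).const_mul ε)
          simp only [zero_add, mul_one] at this; exact this
        exact (hud _).comp y h1
      have hivy : IntervalIntegrable (fun y => vy x y) volume (-(1:ℝ)/2) (1/2) :=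
        (hvyx x).intervalIntegrable _ _
      have hiv : IntervalIntegrable (fun y => v x y) volume (-(1:ℝ)/2) (1/2) :=
        (hvx x).intervalIntegrable _ _
      have hcdu : Continuous fun y : ℝ => deriv (u ε) (cEps ε x + ε * y) :=
        hduc.comp (continuous_const.add (continuous_const.mul continuous_id))
      have ibp1 := intervalIntegral.integral_mul_deriv_eq_deriv_mul
        (fun y _ => hTud y) (fun y _ => hvyd x y)
        ((hcdu.mul continuous_const).intervalIntegrable _ _) hivy
      have ibp2 := intervalIntegral.integral_mul_deriv_eq_deriv_mul
        (fun y _ => hu1yd x y) (fun y _ => hvyd x y)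
        ((hw1yx x).intervalIntegrable _ _) hivy
      have ibp3 := intervalIntegral.integral_mul_deriv_eq_deriv_mul
        (u := fun y : ℝ => y) (u' := fun _ => (1:ℝ))
        (fun y _ => hasDerivAt_id y) (fun y _ => hvyd x y)
        (continuous_const.intervalIntegrable _ _) hivy
      have ibp4 := intervalIntegral.integral_eq_sub_of_hasDerivAt
        (f := fun y => v x y) (f' := fun y => vy x y) (fun y _ => hvyd x y) hivy
      simp only [hvbd1, hvbd2, mul_zero, zero_mul] at ibp1 ibp2 ibp3 ibp4
      have ibp1' : (∫ y in (-(1:ℝ)/2)..(1/2), u ε (cEps ε x + ε * y) * vy x y)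
          = -∫ y in (-(1:ℝ)/2)..(1/2), (deriv (u ε) (cEps ε x + ε * y) * ε) * v x y := by
        rw [ibp1]; ring
      have ibp2' : (∫ y in (-(1:ℝ)/2)..(1/2), u1 x y * vy x y)
          = -∫ y in (-(1:ℝ)/2)..(1/2), w1y x y * v x y := by rw [ibp2]; ring
      have ibp3' : (∫ y in (-(1:ℝ)/2)..(1/2), y * vy x y)
          = -∫ y in (-(1:ℝ)/2)..(1/2), v x y := by
        rw [ibp3]
        have h6 : (∫ y in (-(1:ℝ)/2)..(1/2), (1:ℝ) * v x y)
            = ∫ y in (-(1:ℝ)/2)..(1/2), v x y :=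
          intervalIntegral.integral_congr fun y _ => one_mul _
        rw [h6]; ring
      have ibp4' : (∫ y in (-(1:ℝ)/2)..(1/2), vy x y) = 0 := by rw [ibp4]; ring
      have hiA : IntervalIntegrable (fun y => u0 x * vy x y) volume (-(1:ℝ)/2) (1/2) :=
        (continuous_const.mul (hvyx x)).intervalIntegrable _ _
      have hiB : IntervalIntegrable (fun y => ε * (u1 x y * vy x y)) volume (-(1:ℝ)/2) (1/2) :=
        (continuous_const.mul ((hu1x x).mul (hvyx x))).intervalIntegrable _ _
      have hiC : IntervalIntegrable (fun y => (ε * deriv u0 x) * (y * vy x y))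
          volume (-(1:ℝ)/2) (1/2) :=
        (continuous_const.mul (continuous_id.mul (hvyx x))).intervalIntegrable _ _
      have hiD : IntervalIntegrable (fun y => w ε x y * vy x y) volume (-(1:ℝ)/2) (1/2) :=
        ((hwcont x).mul (hvyx x)).intervalIntegrable _ _
      have hsplit : (∫ y in (-(1:ℝ)/2)..(1/2), u ε (cEps ε x + ε * y) * vy x y)
          = u0 x * (∫ y in (-(1:ℝ)/2)..(1/2), vy x y)
            + ε * (∫ y in (-(1:ℝ)/2)..(1/2), u1 x y * vy x y)
            + (ε * deriv u0 x) * (∫ y in (-(1:ℝ)/2)..(1/2), y * vy x y)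
            + ∫ y in (-(1:ℝ)/2)..(1/2), w ε x y * vy x y := by
        rw [← intervalIntegral.integral_const_mul, ← intervalIntegral.integral_const_mul,
          ← intervalIntegral.integral_const_mul,
          ← intervalIntegral.integral_add hiA hiB,
          ← intervalIntegral.integral_add (hiA.add hiB) hiC,
          ← intervalIntegral.integral_add ((hiA.add hiB).add hiC) hiD]
        refine intervalIntegral.integral_congr fun y _ => ?_
        simp only [hwdef, twoScale]
        ring
      have e1 : (∫ y in (-(1:ℝ)/2)..(1/2), (deriv (u ε) (cEps ε x + ε * y) * ε) * v x y)
          = ε * ∫ y in (-(1:ℝ)/2)..(1/2), deriv (u ε) (cEps ε x + ε * y) * v x y := by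
        rw [← intervalIntegral.integral_const_mul]
        exact intervalIntegral.integral_congr fun y _ => by ring
      have hmain : ε * (∫ y in (-(1:ℝ)/2)..(1/2), deriv (u ε) (cEps ε x + ε * y) * v x y)
          = ε * (∫ y in (-(1:ℝ)/2)..(1/2), w1y x y * v x y)
            + (ε * deriv u0 x) * (∫ y in (-(1:ℝ)/2)..(1/2), v x y)
            - ∫ y in (-(1:ℝ)/2)..(1/2), w ε x y * vy x y := by
        have h1 := hsplit
        rw [ibp1', ibp2', ibp3', ibp4', e1] at h1
        linarith [h1]
      have hTwo : (∫ y in (-(1:ℝ)/2)..(1/2), twoScale ε (deriv (u ε)) x y * v x y)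
          = ∫ y in (-(1:ℝ)/2)..(1/2), deriv (u ε) (cEps ε x + ε * y) * v x y := rfl
      have hPdy : (∫ y in (-(1:ℝ)/2)..(1/2), (deriv u0 x + pdy u1 x y) * v x y)
          = deriv u0 x * (∫ y in (-(1:ℝ)/2)..(1/2), v x y)
            + ∫ y in (-(1:ℝ)/2)..(1/2), w1y x y * v x y := by
        have h2 : (∫ y in (-(1:ℝ)/2)..(1/2), (deriv u0 x + pdy u1 x y) * v x y)
            = ∫ y in (-(1:ℝ)/2)..(1/2), (deriv u0 x * v x y + w1y x y * v x y) :=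
          intervalIntegral.integral_congr fun y _ => by rw [hpdyu1]; ring
        rw [h2, intervalIntegral.integral_add (f := fun y => deriv u0 x * v x y) (g := fun y => w1y x y * v x y)
          ((continuous_const.mul (hvx x)).intervalIntegrable _ _)
          (((hw1yx x).mul (hvx x)).intervalIntegrable _ _),
          intervalIntegral.integral_const_mul]
      have hDiv : (∫ y in (-(1:ℝ)/2)..(1/2), (w ε x y / ε) * vy x y)
          = (1/ε) * ∫ y in (-(1:ℝ)/2)..(1/2), w ε x y * vy x y := by
        rw [← intervalIntegral.integral_const_mul]
        exact intervalIntegral.integral_congr fun y _ => by ring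
      rw [hTwo, hPdy, hDiv]
      have h3 : ε * (∫ y in (-(1:ℝ)/2)..(1/2), deriv (u ε) (cEps ε x + ε * y) * v x y)
          = ε * ((deriv u0 x * (∫ y in (-(1:ℝ)/2)..(1/2), v x y)
              + ∫ y in (-(1:ℝ)/2)..(1/2), w1y x y * v x y)
            - (1/ε) * ∫ y in (-(1:ℝ)/2)..(1/2), w ε x y * vy x y) := by
        rw [hmain]
        field_simp
        ring
      exact mul_left_cancel₀ hεne h3
    -- integrability of the two x-functions
    have hGm : AEStronglyMeasurable
        (fun x : ℝ => ∫ y in (-(1:ℝ)/2)..(1/2), (deriv u0 x + pdy u1 x y) * v x y) volume := by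
      have h1 : (fun x : ℝ => ∫ y in (-(1:ℝ)/2)..(1/2), (deriv u0 x + pdy u1 x y) * v x y)
          = fun x : ℝ => ∫ y, (fun p : ℝ × ℝ =>
              (deriv u0 p.1 + w1y p.1 p.2) * v p.1 p.2) (x, y) ∂ν := by
        funext x
        rw [intervalIntegral.integral_of_le hab]
        refine integral_congr_ae (Eventually.of_forall fun y => ?_)
        show (deriv u0 x + pdy u1 x y) * v x y = _
        rw [hpdyu1]
      rw [h1]
      exact (Continuous.stronglyMeasurable
        (((hu0'.comp continuous_fst).add hw1yc).mul hvc)).integral_prod_right'.aestronglyMeasurable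
    have hGi : Integrable
        (fun x : ℝ => ∫ y in (-(1:ℝ)/2)..(1/2), (deriv u0 x + pdy u1 x y) * v x y) volume := by
      refine Integrable.mono' ((integrable_indicator_iff measurableSet_Icc).2
        (integrableOn_const measure_Icc_lt_top.ne :
          IntegrableOn (fun _ : ℝ => (M0 + Mdu) * Mv) (Icc (-R) R) volume)) hGm (Eventually.of_forall fun x => ?_)
      by_cases hx : |x| ≤ R
      · rw [indicator_of_mem (mem_Icc.2 (abs_le.1 hx))]
        have hb := intervalIntegral.norm_integral_le_of_norm_le_const
          (C := (M0 + Mdu) * Mv) (f := fun y => (deriv u0 x + pdy u1 x y) * v x y)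
          (a := -(1:ℝ)/2) (b := 1/2) ?_
        · calc ‖∫ y in (-(1:ℝ)/2)..(1/2), (deriv u0 x + pdy u1 x y) * v x y‖
              ≤ (M0 + Mdu) * Mv * |1/2 - (-(1:ℝ)/2)| := hb
            _ = (M0 + Mdu) * Mv := by norm_num
        · intro y hy
          rw [uIoc_of_le hab] at hy
          have hy' : |y| ≤ 1 := abs_le.2 ⟨by linarith [hy.1], by linarith [hy.2]⟩
          rw [Real.norm_eq_abs, abs_mul, hpdyu1]
          exact mul_le_mul ((abs_add_le _ _).trans (add_le_add (hu0derBdd x) (hMdu x y hx hy')))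
            (hMv x y hx hy') (abs_nonneg _) (add_nonneg hM00 hMdu0)
      · have hxR : R ≤ |x| := le_of_lt (lt_of_not_ge hx)
        have h0 : (∫ y in (-(1:ℝ)/2)..(1/2), (deriv u0 x + pdy u1 x y) * v x y) = 0 := by
          calc (∫ y in (-(1:ℝ)/2)..(1/2), (deriv u0 x + pdy u1 x y) * v x y)
              = ∫ _ in (-(1:ℝ)/2)..(1/2), (0:ℝ) :=
                intervalIntegral.integral_congr fun y _ => by rw [hvsupp x y hxR, mul_zero]
            _ = 0 := intervalIntegral.integral_zero
        rw [h0, norm_zero]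
        exact indicator_nonneg (fun _ _ => mul_nonneg (add_nonneg hM00 hMdu0) hMv0) x
    have hHm : AEStronglyMeasurable
        (fun x : ℝ => ∫ y in (-(1:ℝ)/2)..(1/2), (w ε x y / ε) * vy x y) volume := by
      have h1 : (fun x : ℝ => ∫ y in (-(1:ℝ)/2)..(1/2), (w ε x y / ε) * vy x y)
          = fun x : ℝ => ∫ y, (fun p : ℝ × ℝ => (w ε p.1 p.2 / ε) * vy p.1 p.2) (x, y) ∂ν := by
        funext x; rw [intervalIntegral.integral_of_le hab]
      rw [h1]
      exact (((hwm.div_const ε).mul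
        hvyc.measurable).stronglyMeasurable).integral_prod_right'.aestronglyMeasurable
    have hHi : Integrable
        (fun x : ℝ => ∫ y in (-(1:ℝ)/2)..(1/2), (w ε x y / ε) * vy x y) volume := by
      refine Integrable.mono' ((integrable_indicator_iff measurableSet_Icc).2
        (integrableOn_const measure_Icc_lt_top.ne :
          IntegrableOn (fun _ : ℝ => ((Mu + Mu0 + M1 + M0)/ε) * Md) (Icc (-R) R) volume)) hHm (Eventually.of_forall fun x => ?_)
      by_cases hx : |x| ≤ R
      · rw [indicator_of_mem (mem_Icc.2 (abs_le.1 hx))]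
        have hb := intervalIntegral.norm_integral_le_of_norm_le_const
          (C := ((Mu + Mu0 + M1 + M0)/ε) * Md) (f := fun y => (w ε x y / ε) * vy x y)
          (a := -(1:ℝ)/2) (b := 1/2) ?_
        · calc ‖∫ y in (-(1:ℝ)/2)..(1/2), (w ε x y / ε) * vy x y‖
              ≤ ((Mu + Mu0 + M1 + M0)/ε) * Md * |1/2 - (-(1:ℝ)/2)| := hb
            _ = ((Mu + Mu0 + M1 + M0)/ε) * Md := by norm_num
        · intro y hy
          rw [uIoc_of_le hab] at hy
          have hy2 : |y| ≤ 1/2 := abs_le.2 ⟨by linarith [hy.1], hy.2⟩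
          have hy1 : |y| ≤ 1 := by linarith
          rw [Real.norm_eq_abs, abs_mul, abs_div, abs_of_pos hε0]
          exact mul_le_mul ((div_le_div_iff_of_pos_right hε0).2 (hwbd x y hx hy2)) (hMd x y hx hy1)
            (abs_nonneg _) (div_nonneg hKw0 hε0.le)
      · have hxR : R ≤ |x| := le_of_lt (lt_of_not_ge hx)
        have h0 : (∫ y in (-(1:ℝ)/2)..(1/2), (w ε x y / ε) * vy x y) = 0 := by
          calc (∫ y in (-(1:ℝ)/2)..(1/2), (w ε x y / ε) * vy x y)
              = ∫ _ in (-(1:ℝ)/2)..(1/2), (0:ℝ) :=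
                intervalIntegral.integral_congr fun y _ => by rw [hvy0 x y hxR, mul_zero]
            _ = 0 := intervalIntegral.integral_zero
        rw [h0, norm_zero]
        exact indicator_nonneg (fun _ _ => mul_nonneg (div_nonneg hKw0 hε0.le) hMd0) x
    have hJint : Integrable (fun p : ℝ × ℝ => (w ε p.1 p.2 / ε) * vy p.1 p.2) P := by
      have hbd : Integrable (fun z : ℝ × ℝ =>
          (Icc (-R) R).indicator (fun _ => ((Mu + Mu0 + M1 + M0)/ε) * Md) z.1 * (1:ℝ)) P :=
        Integrable.mul_prod ((integrable_indicator_iff measurableSet_Icc).2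
          (integrableOn_const (C := ((Mu + Mu0 + M1 + M0)/ε) * Md) measure_Icc_lt_top.ne))
          (integrableOn_const (C := (1:ℝ)) (μ := volume) measure_Ioc_lt_top.ne : Integrable (fun _ => (1:ℝ)) ν)
      refine Integrable.mono' hbd
        (((hwm.div_const ε).mul hvyc.measurable).aestronglyMeasurable) ?_
      filter_upwards [ae_snd_mem_Ioc] with p hp
      by_cases hx : |p.1| ≤ R
      · rw [indicator_of_mem (mem_Icc.2 (abs_le.1 hx)), mul_one]
        have hy2 : |p.2| ≤ 1/2 := abs_le.2 ⟨by linarith [hp.1], hp.2⟩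
        have hy1 : |p.2| ≤ 1 := by linarith
        rw [Real.norm_eq_abs, abs_mul, abs_div, abs_of_pos hε0]
        exact mul_le_mul ((div_le_div_iff_of_pos_right hε0).2 (hwbd _ _ hx hy2)) (hMd _ _ hx hy1)
          (abs_nonneg _) (div_nonneg hKw0 hε0.le)
      · rw [hvy0 _ _ (le_of_lt (lt_of_not_ge hx)), mul_zero, norm_zero, mul_one]
        exact indicator_nonneg (fun _ _ => mul_nonneg (div_nonneg hKw0 hε0.le) hMd0) _
    refine ⟨hJint, ?_⟩
    have hswap : (∫ x : ℝ, ∫ y in (-(1:ℝ)/2)..(1/2), (w ε x y / ε) * vy x y)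
        = ∫ p : ℝ × ℝ, (w ε p.1 p.2 / ε) * vy p.1 p.2 ∂P := by
      have h1 : (∫ x : ℝ, ∫ y in (-(1:ℝ)/2)..(1/2), (w ε x y / ε) * vy x y)
          = ∫ x : ℝ, ∫ y, (fun p : ℝ × ℝ => (w ε p.1 p.2 / ε) * vy p.1 p.2) (x, y) ∂ν :=
        integral_congr_ae (Eventually.of_forall fun x => intervalIntegral.integral_of_le hab)
      rw [h1, ← MeasureTheory.integral_prod _ hJint]
    calc (∫ x : ℝ, ∫ y in (-(1:ℝ)/2)..(1/2), twoScale ε (deriv (u ε)) x y * v x y)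
        = ∫ x : ℝ, ((∫ y in (-(1:ℝ)/2)..(1/2), (deriv u0 x + pdy u1 x y) * v x y)
            - ∫ y in (-(1:ℝ)/2)..(1/2), (w ε x y / ε) * vy x y) :=
          integral_congr_ae (Eventually.of_forall inner)
      _ = (∫ x : ℝ, ∫ y in (-(1:ℝ)/2)..(1/2), (deriv u0 x + pdy u1 x y) * v x y)
            - ∫ x : ℝ, ∫ y in (-(1:ℝ)/2)..(1/2), (w ε x y / ε) * vy x y :=
          integral_sub hGi hHi
      _ = _ := by rw [hswap]

  -- conclusion
  rw [Metric.tendsto_nhds]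
  intro δ hδ
  set t : ℝ := (W + 1) / δ with htdef
  have ht : 0 < t := by positivity
  have hδ' : 0 < δ / t := by positivity
  have hev1 : ∀ᶠ ε in 𝓝[>] (0:ℝ), ε ∈ Ioo (0:ℝ) 1 :=
    Ioo_mem_nhdsGT_of_mem ⟨le_refl 0, one_pos⟩
  have hev2 := (Metric.tendsto_nhds.1 hyp2) (δ / t) hδ'
  filter_upwards [hev1, hev2] with ε hε hq
  rw [Real.dist_eq]
  rw [(key ε hε).2]
  have hJ := (key ε hε).1
  have habs : |(∫ x : ℝ, ∫ y in (-(1:ℝ)/2)..(1/2), (deriv u0 x + pdy u1 x y) * v x y)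
      - (∫ p : ℝ × ℝ, (w ε p.1 p.2 / ε) * vy p.1 p.2 ∂P)
      - (∫ x : ℝ, ∫ y in (-(1:ℝ)/2)..(1/2), (deriv u0 x + pdy u1 x y) * v x y)|
      = |∫ p : ℝ × ℝ, (w ε p.1 p.2 / ε) * vy p.1 p.2 ∂P| := by
    rw [sub_sub_cancel_left, abs_neg]
  rw [habs]
  -- bound the integral
  have hb1 : |∫ p : ℝ × ℝ, (w ε p.1 p.2 / ε) * vy p.1 p.2 ∂P|
      ≤ ∫ p : ℝ × ℝ, (t/2) * (w ε p.1 p.2 / ε) ^ 2 + (1/(2*t)) * (vy p.1 p.2) ^ 2 ∂P := by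
    have h0 : |∫ p : ℝ × ℝ, (w ε p.1 p.2 / ε) * vy p.1 p.2 ∂P|
        ≤ ∫ p : ℝ × ℝ, |(w ε p.1 p.2 / ε) * vy p.1 p.2| ∂P := by
      simpa only [Real.norm_eq_abs] using norm_integral_le_integral_norm
        (f := fun p : ℝ × ℝ => (w ε p.1 p.2 / ε) * vy p.1 p.2) (μ := P)
    refine h0.trans (integral_mono hJ.abs
      (((hQint ε hε).const_mul _).add (hvy2int.const_mul _)) fun p => amgm_abs t _ _ ht)
  have hb2 : (∫ p : ℝ × ℝ, (t/2) * (w ε p.1 p.2 / ε) ^ 2 + (1/(2*t)) * (vy p.1 p.2) ^ 2 ∂P)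
      = (t/2) * (∫ p : ℝ × ℝ, (w ε p.1 p.2 / ε) ^ 2 ∂P) + (1/(2*t)) * W := by
    rw [integral_add ((hQint ε hε).const_mul _) (hvy2int.const_mul _),
      MeasureTheory.integral_const_mul, MeasureTheory.integral_const_mul]
  have hQval : (∫ p : ℝ × ℝ, (w ε p.1 p.2 / ε) ^ 2 ∂P) < δ / t := by
    rw [← hQeq ε hε]
    have := hq
    rw [Real.dist_eq, sub_zero] at this
    calc (1 / ε ^ 2) * (∫ x : ℝ, ∫ y in (-(1:ℝ)/2)..(1/2), (w ε x y) ^ 2)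
        ≤ |(1 / ε ^ 2) * (∫ x : ℝ, ∫ y in (-(1:ℝ)/2)..(1/2), (w ε x y) ^ 2)| := le_abs_self _
      _ < δ / t := this
  have hQ0 : 0 ≤ ∫ p : ℝ × ℝ, (w ε p.1 p.2 / ε) ^ 2 ∂P := integral_nonneg fun p => sq_nonneg _
  have hWlt : (1/(2*t)) * W < δ / 2 := by
    rw [htdef]
    rw [div_mul_eq_mul_div, mul_comm]
    have h2t : (0:ℝ) < 2 * ((W + 1) / δ) := by positivity
    rw [div_lt_div_iff₀ h2t (by norm_num : (0:ℝ) < 2)]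
    have : W * 1 * 2 < δ * (2 * ((W + 1) / δ)) := by
      have : δ * (2 * ((W + 1) / δ)) = 2 * (W + 1) := by field_simp
      rw [this]; nlinarith
    calc W * 1 * 2 = W * 1 * 2 := rfl
      _ < δ * (2 * ((W + 1) / δ)) := this
  calc |∫ p : ℝ × ℝ, (w ε p.1 p.2 / ε) * vy p.1 p.2 ∂P|
      ≤ (t/2) * (∫ p : ℝ × ℝ, (w ε p.1 p.2 / ε) ^ 2 ∂P) + (1/(2*t)) * W := by
        rw [← hb2]; exact hb1
    _ < (t/2) * (δ/t) + δ/2 := by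
        have h1 : (t/2) * (∫ p : ℝ × ℝ, (w ε p.1 p.2 / ε) ^ 2 ∂P) ≤ (t/2) * (δ/t) :=
          mul_le_mul_of_nonneg_left hQval.le (by positivity)
        linarith
    _ ≤ δ/2 + δ/2 := by
        have : (t/2) * (δ/t) = δ/2 := by field_simp
        rw [this]
    _ = δ := by ring
end
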